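/- Let G be a finite abelian group, n a positive integer, N = 2ⁿ, and let A = F^{⊗n} be the n-fold Kronecker power of [[1,0],[1,1]], regarded as a 0/1 matrix. Define the encoding map φ : G^N → G^N by φ(u)_j = Σ_{i : A_{ij} = 1} u_i (sum in G). Then: (a) φ is a bijection of G^N; and (b) for any partition {A_H : H ≤ G} of {1,…,N} indexed by the subgroups of G and any choice of transversals T_H of H in G, distinct messages m₁ ≠ m₂ in ⊕_{H ≤ G} T_H^{A_H} (the set of tuples whose i-th entry lies in T_H whenever i ∈ A_H) satisfy φ(m₁) − φ(m₂) ∉ C_i, where C_i = φ( ⊕_{H ≤ G} H^{A_H} ) is the inner group code; that is, distinct messages are mapped into distinct cosets of C_i, so the polar encoder is a nested group code. -/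

import Mathlib

/-!
Index the coordinates by `(Fin 2)ⁿ` with its componentwise order. Then `A i j = 1` exactly when
`j ≤ i`, so `φ u j = ∑_{i ≥ j} u i`: the encoder is an additive map that is unitriangular with
respect to this order, and downward induction shows its kernel is trivial. An injective self-map
of the finite set `G^N` is bijective. For (b), `φ m₁ - φ m₂ = φ (m₁ - m₂)`, so it lies in
`C_i = φ(⊕ H^{A_H})` only if `m₁ i - m₂ i ∈ H` for `i ∈ A_H`; two elements of a transversal of `H`
that differ by an element of `H` are equal.
-/

open Finset

section UpperSum

open scoped Classical

variable {ι G : Type*} [Fintype ι] [PartialOrder ι] [AddCommGroup G]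

noncomputable def upperSum : (ι → G) →+ (ι → G) where
  toFun u j := ∑ i with j ≤ i, u i
  map_zero' := by ext; simp
  map_add' u v := by ext; simp [sum_add_distrib]

theorem upperSum_apply (u : ι → G) (j : ι) : upperSum u j = ∑ i with j ≤ i, u i := rfl

theorem upperSum_apply_eq_add (u : ι → G) (j : ι) :
    upperSum u j = u j + ∑ i with j < i, u i := by
  rw [upperSum_apply, ← add_sum_erase _ _ (mem_filter.2 ⟨mem_univ j, le_rfl⟩)]
  congr 1
  refine sum_congr ?_ fun _ _ => rfl
  ext i
  simp [lt_iff_le_and_ne, ne_comm, and_comm]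

theorem upperSum_injective : Function.Injective (upperSum : (ι → G) → ι → G) := by
  refine (injective_iff_map_eq_zero _).2 fun u hu => funext fun j => ?_
  induction j using WellFoundedGT.induction with
  | _ j ih =>
    have hj := congrFun hu j
    rwa [upperSum_apply_eq_add, sum_eq_zero fun i hi => ih i (mem_filter.1 hi).2, add_zero] at hj

end UpperSum

theorem eq_of_mem_transversal {G : Type*} [AddGroup G] {H : AddSubgroup G} {T : Set G}
    (hT : ∀ g : G, ∃! t, t ∈ T ∧ g - t ∈ H) {a b : G} (ha : a ∈ T) (hb : b ∈ T)
    (hab : a - b ∈ H) : a = b :=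
  (hT a).unique ⟨ha, by simp [H.zero_mem]⟩ ⟨hb, hab⟩

theorem fin_two_matrix_entry_eq_one_iff (a b : Fin 2) :
    (!![1, 0; 1, 1] : Matrix (Fin 2) (Fin 2) ℕ) a b = 1 ↔ b ≤ a := by
  fin_cases a <;> fin_cases b <;> decide

theorem kroneckerPower_entry_eq_one_iff {n : ℕ} (x y : Fin n → Fin 2) :
    ∏ t, (!![1, 0; 1, 1] : Matrix (Fin 2) (Fin 2) ℕ) (x t) (y t) = 1 ↔ y ≤ x := by
  simp only [prod_eq_one_iff, mem_univ, true_imp_iff, fin_two_matrix_entry_eq_one_iff,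
    Pi.le_def]

theorem polar_encoder_nested_group_code
    {G : Type} [Fintype G] [AddCommGroup G] (n : ℕ)
    (F : Matrix (Fin 2) (Fin 2) ℕ) (hF : F = !![1, 0; 1, 1])
    (A : Matrix (Fin n → Fin 2) (Fin n → Fin 2) ℕ)
    (hA : ∀ x y, A x y = ∏ i : Fin n, F (x i) (y i))
    (φ : ((Fin n → Fin 2) → G) → ((Fin n → Fin 2) → G))
    (hφ : ∀ u j, φ u j = ∑ i ∈ Finset.univ.filter (fun i => A i j = 1), u i)
    -- the partition `{A_H : H ≤ G}` of the index set, encoded by the map sending each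
    -- index to the subgroup of its class
    (cls : (Fin n → Fin 2) → AddSubgroup G)
    -- a transversal `T_H` of each subgroup `H` in `G`
    (Tsel : AddSubgroup G → Set G)
    (hTsel : ∀ (H : AddSubgroup G) (g : G), ∃! t, t ∈ Tsel H ∧ g - t ∈ H)
    -- the inner group code
    (Ci : Set ((Fin n → Fin 2) → G))
    (hCi : Ci = φ '' {u | ∀ i, u i ∈ cls i}) :
    Function.Bijective φ ∧
    ∀ m₁ m₂ : (Fin n → Fin 2) → G,
      (∀ i, m₁ i ∈ Tsel (cls i)) → (∀ i, m₂ i ∈ Tsel (cls i)) → m₁ ≠ m₂ →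
        φ m₁ - φ m₂ ∉ Ci := by
  subst hF hCi
  have hφ_eq : φ = upperSum := by
    ext u j
    classical
    rw [hφ, upperSum_apply]
    refine sum_congr (filter_congr fun i _ => ?_) fun _ _ => rfl
    rw [hA, kroneckerPower_entry_eq_one_iff]
  subst hφ_eq
  refine ⟨Finite.injective_iff_bijective.1 upperSum_injective, ?_⟩
  rintro m₁ m₂ h₁ h₂ hne ⟨w, hw, hw_eq⟩
  rw [← map_sub] at hw_eq
  obtain rfl := upperSum_injective hw_eq
  exact hne (funext fun i => eq_of_mem_transversal (hTsel (cls i)) (h₁ i) (h₂ i) (hw i))
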